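/- Let K be a consistent and deductively closed set of propositional formulas, {Φ_C, Φ_A, Φ_R} a credibility partition of Φ, and B°_K : Φ → 2^Φ a filtered belief revision function based on K. If φ ∈ Φ_A and ¬φ ∈ K, then φ ∉ B°_K(φ) and ¬φ ∉ B°_K(φ); that is, upon receiving an allowable item of information contradicting her initial beliefs, the agent suspends judgment concerning φ. -/

import Mathlib

/-! Propositional language built from a set of atomic formulas via negation and disjunction. -/

inductive PropForm (α : Type) : Type
  | atom : α → PropForm α
  | neg : PropForm α → PropForm α
  | or : PropForm α → PropForm α → PropForm α

namespace PropForm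

/-- Truth value of a formula under a boolean valuation of the atoms. -/
def eval (v : α → Bool) : PropForm α → Bool
  | atom a => v a
  | neg φ => !(eval v φ)
  | or φ ψ => (eval v φ) || (eval v ψ)

/-- Conjunction, defined from negation and disjunction. -/
def and (φ ψ : PropForm α) : PropForm α := neg (or (neg φ) (neg ψ))

/-- Material implication. -/
def imp (φ ψ : PropForm α) : PropForm α := or (neg φ) ψ

/-- Biconditional. -/
def biimp (φ ψ : PropForm α) : PropForm α := and (imp φ ψ) (imp ψ φ)

/-- A formula is a tautology if it is true under every boolean valuation. -/
def Tautology (φ : PropForm α) : Prop := ∀ v : α → Bool, eval v φ = true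

/-- A formula is a contradiction if it is false under every boolean valuation. -/
def Contradiction (φ : PropForm α) : Prop := ∀ v : α → Bool, eval v φ = false

end PropForm

open PropForm

/-- The PL-deductive closure of `F`: ψ ∈ [F]^PL iff there are φ₁,…,φₙ ∈ F (n ≥ 0) such that
(φ₁ ∧ … ∧ φₙ) → ψ is a tautology (stated via the equivalent curried implication
φ₁ → (φ₂ → ⋯ → ψ)). -/
def Cn (F : Set (PropForm α)) : Set (PropForm α) :=
  {ψ | ∃ l : List (PropForm α), (∀ φ ∈ l, φ ∈ F) ∧ Tautology (l.foldr PropForm.imp ψ)}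

/-- A set of formulas is consistent if its deductive closure is not the set of all formulas. -/
def ConsistentSet (F : Set (PropForm α)) : Prop := Cn F ≠ Set.univ

/-- A set of formulas is deductively closed if it equals its own deductive closure. -/
def DedClosed (F : Set (PropForm α)) : Prop := F = Cn F

/-- A credibility partition of the set of formulas into credible (ΦC), allowable (ΦA) and
rejected (ΦR) formulas. -/
structure CredPartition (ΦC ΦA ΦR : Set (PropForm α)) : Prop where
  disjCA : Disjoint ΦC ΦA
  disjCR : Disjoint ΦC ΦR
  disjAR : Disjoint ΦA ΦR
  cover : ΦC ∪ ΦA ∪ ΦR = Set.univ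
  taut_mem_C : ∀ φ : PropForm α, Tautology φ → φ ∈ ΦC
  C_consistent : ∀ φ ∈ ΦC, ¬ Contradiction φ
  C_equiv_closed : ∀ φ ψ : PropForm α, Tautology (φ.biimp ψ) → φ ∈ ΦC → ψ ∈ ΦC
  A_consistent : ∀ φ ∈ ΦA, ¬ Contradiction φ
  A_equiv_closed : ∀ φ ψ : PropForm α, Tautology (φ.biimp ψ) → φ ∈ ΦA → ψ ∈ ΦA
  contra_mem_R : ∀ φ : PropForm α, Contradiction φ → φ ∈ ΦR

/-- Basic AGM belief revision function based on K: postulates AGM1–AGM6. -/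
structure IsBasicAGM (K : Set (PropForm α)) (B : PropForm α → Set (PropForm α)) : Prop where
  agm1 : ∀ φ : PropForm α, B φ = Cn (B φ)
  agm2 : ∀ φ : PropForm α, φ ∈ B φ
  agm3 : ∀ φ : PropForm α, B φ ⊆ Cn (K ∪ {φ})
  agm4 : ∀ φ : PropForm α, φ.neg ∉ K → Cn (K ∪ {φ}) ⊆ B φ
  agm5 : ∀ φ : PropForm α, B φ = Set.univ ↔ Contradiction φ
  agm6 : ∀ φ ψ : PropForm α, Tautology (φ.biimp ψ) → B φ = B ψ

/-- Filtered belief revision function based on K, relative to a credibility partition. -/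
structure IsFiltered (ΦC ΦA ΦR K : Set (PropForm α))
    (B : PropForm α → Set (PropForm α)) : Prop where
  f1 : ∀ φ ∈ ΦR, B φ = K
  f2a : ∀ φ : PropForm α, φ.neg ∉ K → φ ∈ ΦC → B φ = Cn (K ∪ {φ})
  f2b : ∀ φ : PropForm α, φ.neg ∉ K → φ ∈ ΦA → B φ = K
  f3 : ∀ φ : PropForm α, φ.neg ∈ K → ConsistentSet (B φ) ∧ DedClosed (B φ)
  f3a : ∀ φ : PropForm α, φ.neg ∈ K → φ ∈ ΦC → φ ∈ B φ
  f3b : ∀ φ : PropForm α, φ.neg ∈ K → φ ∈ ΦA →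
    B φ ⊆ K \ {φ.neg} ∧ Cn (B φ ∪ {φ.neg}) = K
  f4 : ∀ φ ψ : PropForm α, Tautology (φ.biimp ψ) → B φ = B ψ

variable {α : Type}

lemma subset_Cn (F : Set (PropForm α)) : F ⊆ Cn F := fun ψ hψ =>
  ⟨[ψ], by simpa using hψ, fun v => by simp [PropForm.imp, PropForm.eval]⟩

lemma Cn_eq_univ_of_mem_of_neg_mem {F : Set (PropForm α)} {φ : PropForm α}
    (hφ : φ ∈ F) (hnφ : φ.neg ∈ F) : Cn F = Set.univ := by
  refine Set.eq_univ_of_forall fun ψ => ⟨[φ, φ.neg], ?_, fun v => ?_⟩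
  · simp only [List.mem_cons, List.not_mem_nil, or_false]
    rintro χ (rfl | rfl) <;> assumption
  · cases h : PropForm.eval v φ <;> simp [PropForm.imp, PropForm.eval, h]

lemma ConsistentSet.ne_univ {K : Set (PropForm α)} (hK : ConsistentSet K) : K ≠ Set.univ :=
  fun hKuniv => hK (Set.eq_univ_of_univ_subset (hKuniv ▸ subset_Cn K))

namespace IsFiltered

variable {ΦC ΦA ΦR K : Set (PropForm α)} {B : PropForm α → Set (PropForm α)} {φ : PropForm α}

lemma neg_notMem_of_mem_allowable (hB : IsFiltered ΦC ΦA ΦR K B) (hA : φ ∈ ΦA)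
    (hneg : φ.neg ∈ K) : φ.neg ∉ B φ := fun hmem =>
  ((hB.f3b φ hneg hA).1 hmem).2 rfl

/-- Otherwise `[B φ ∪ {¬φ}]^PL`, which is `K`, would contain both `φ` and `¬φ`. -/
lemma notMem_of_mem_allowable (hB : IsFiltered ΦC ΦA ΦR K B) (hK : ConsistentSet K)
    (hA : φ ∈ ΦA) (hneg : φ.neg ∈ K) : φ ∉ B φ := fun hmem =>
  hK.ne_univ <| (hB.f3b φ hneg hA).2 ▸
    Cn_eq_univ_of_mem_of_neg_mem (Or.inl hmem) (Or.inr rfl)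

end IsFiltered

theorem filtered_suspends_judgment_general {α : Type}
    (ΦC ΦA ΦR K : Set (PropForm α))
    (hKcons : ConsistentSet K)
    (Bo : PropForm α → Set (PropForm α)) (hfilt : IsFiltered ΦC ΦA ΦR K Bo)
    (φ : PropForm α) (hA : φ ∈ ΦA) (hneg : φ.neg ∈ K) :
    φ ∉ Bo φ ∧ φ.neg ∉ Bo φ :=
  ⟨hfilt.notMem_of_mem_allowable hKcons hA hneg, hfilt.neg_notMem_of_mem_allowable hA hneg⟩

/-- if φ is allowable and ¬φ ∈ K, then a filtered belief revision function
suspends judgment concerning φ: neither φ nor ¬φ belongs to B°(φ). -/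
theorem filtered_suspends_judgment {α : Type} [Countable α] [Nonempty α]
    (ΦC ΦA ΦR K : Set (PropForm α)) (hpart : CredPartition ΦC ΦA ΦR)
    (hKcons : ConsistentSet K) (hKded : DedClosed K)
    (Bo : PropForm α → Set (PropForm α)) (hfilt : IsFiltered ΦC ΦA ΦR K Bo)
    (φ : PropForm α) (hA : φ ∈ ΦA) (hneg : φ.neg ∈ K) :
    φ ∉ Bo φ ∧ φ.neg ∉ Bo φ :=
  filtered_suspends_judgment_general ΦC ΦA ΦR K hKcons Bo hfilt φ hA hneg
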